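/- arXiv:2505.20811 — 6 statements merged into one kernel-verified Lean document; each statement's English description precedes it below -/
import Mathlib

section
/- Let A = T[0, a_1, ..., a_{n-1}] be a symmetric Boolean Toeplitz matrix with zero main diagonal, s_0 = min S_A, and 2 s_0 > n, and set m = 2 s_0 - n. Let W = [1, n - s_0] ∪ [1 + s_0, n]. Then the induced subgraph G(A)[W], under the normalized (order-preserving) relabeling of W onto {1,...,n-m}, is isomorphic to the Toeplitz graph G(T[a_m, a_{m+1}, ..., a_{n-1}]). -/
/-- Difference of labels of two vertices of `Fin n`. -/
def tdiff {n : ℕ} (u v : Fin n) : ℕ := max u.val v.val - min u.val v.val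

/-- The (Boolean) Toeplitz graph on vertex labels `{1,…,n}` (encoded as `Fin n`,
where vertex `i : Fin n` carries label `i+1`): distinct vertices are adjacent
iff the difference of their labels lies in `S`. -/
def TGraph (n : ℕ) (S : Set ℕ) : SimpleGraph (Fin n) where
  Adj u v := u ≠ v ∧ tdiff u v ∈ S
  symm := by
    constructor
    intro u v h
    exact ⟨h.1.symm, by simpa [tdiff, Nat.max_comm, Nat.min_comm] using h.2⟩
  loopless := ⟨fun u h => h.1 rfl⟩

/-- `G` is `d`-reachable: any two vertices whose labels differ by `d` are joined by a walk. -/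
def dReachable {n : ℕ} (G : SimpleGraph (Fin n)) (d : ℕ) : Prop :=
  ∀ u v : Fin n, tdiff u v = d → G.Reachable u v

/-- The contraction `G/ℤ_d`: vertices are the residue classes modulo `d`,
and two distinct classes are adjacent iff some representatives are adjacent in `G`. -/
def contract {n : ℕ} (G : SimpleGraph (Fin n)) (d : ℕ) : SimpleGraph (Fin d) where
  Adj i j := i ≠ j ∧ ∃ x y : Fin n, G.Adj x y ∧ (x : ℕ) % d = (i : ℕ) ∧ (y : ℕ) % d = (j : ℕ)
  symm := by
    constructor
    rintro i j ⟨h1, x, y, hxy, hx, hy⟩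
    exact ⟨h1.symm, y, x, hxy.symm, hy, hx⟩
  loopless := ⟨fun i h => h.1 rfl⟩

/-- forward relabeling function -/
def fwdFun (n s₀ M x : ℕ) : ℕ := if x < n - s₀ then x else x - M

/-- backward relabeling function -/
def bwdFun (n s₀ M w : ℕ) : ℕ := if w < n - s₀ then w else w + M

/-- With `s₀ = min S_A`, `2 s₀ > n`, `m = 2 s₀ - n` and
`W = [1, n-s₀] ∪ [1+s₀, n]` (in labels, i.e. values `< n - s₀` or `≥ s₀`),
the induced subgraph `G(A)[W]`, under the normalized (order-preserving) relabeling,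
is isomorphic to the Toeplitz graph `G(T[a_m,…,a_{n-1}])`. -/
theorem stmt2 (n : ℕ) (S : Finset ℕ) (hS : S.Nonempty)
    (hsub : ∀ s ∈ S, 1 ≤ s ∧ s ≤ n - 1) (h2 : n < 2 * S.min' hS) :
    ∃ φ : ((TGraph n ↑S).induce
            {v : Fin n | (v : ℕ) < n - S.min' hS ∨ S.min' hS ≤ (v : ℕ)}) ≃g
          TGraph (n - (2 * S.min' hS - n)) ((fun s => s - (2 * S.min' hS - n)) '' ↑S),
      ∀ x y : {v : Fin n // (v : ℕ) < n - S.min' hS ∨ S.min' hS ≤ (v : ℕ)},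
        (x : Fin n) < (y : Fin n) → φ x < φ y := by
  classical
  set s₀ := S.min' hS with hs₀def
  obtain ⟨hs1, hs2⟩ := hsub _ (S.min'_mem hS)
  set M := 2 * s₀ - n with hMdef
  have hsmin : ∀ s ∈ S, s₀ ≤ s := fun s hs => S.min'_le s hs
  have f1 : ∀ x : {v : Fin n | (v : ℕ) < n - s₀ ∨ s₀ ≤ (v : ℕ)},
      fwdFun n s₀ M ((x : Fin n) : ℕ) < n - M := by
    rintro ⟨⟨x, hx⟩, hmem⟩
    simp only [Set.mem_setOf_eq] at hmem
    simp only [fwdFun]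
    split <;> omega
  have g1 : ∀ w : Fin (n - M), bwdFun n s₀ M (w : ℕ) < n := by
    rintro ⟨w, hw⟩
    simp only [bwdFun]
    split <;> omega
  have g2 : ∀ w : Fin (n - M),
      (⟨bwdFun n s₀ M (w : ℕ), g1 w⟩ : Fin n) ∈
        {v : Fin n | (v : ℕ) < n - s₀ ∨ s₀ ≤ (v : ℕ)} := by
    rintro ⟨w, hw⟩
    simp only [Set.mem_setOf_eq, bwdFun]
    split <;> omega
  let e : {v : Fin n | (v : ℕ) < n - s₀ ∨ s₀ ≤ (v : ℕ)} ≃ Fin (n - M) :=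
    { toFun := fun x => ⟨fwdFun n s₀ M ((x : Fin n) : ℕ), f1 x⟩
      invFun := fun w => ⟨⟨bwdFun n s₀ M (w : ℕ), g1 w⟩, g2 w⟩
      left_inv := by
        rintro ⟨⟨x, hx⟩, hmem⟩
        simp only [Set.mem_setOf_eq] at hmem
        apply Subtype.ext
        apply Fin.ext
        simp only [fwdFun, bwdFun]
        split_ifs <;> omega
      right_inv := by
        rintro ⟨w, hw⟩
        apply Fin.ext
        simp only [fwdFun, bwdFun]
        split_ifs <;> omega }
  have he : ∀ x : {v : Fin n | (v : ℕ) < n - s₀ ∨ s₀ ≤ (v : ℕ)},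
      ((e x : Fin (n - M)) : ℕ) = fwdFun n s₀ M ((x : Fin n) : ℕ) := fun _ => rfl
  have key : ∀ x y : {v : Fin n | (v : ℕ) < n - s₀ ∨ s₀ ≤ (v : ℕ)},
      (TGraph (n - M) ((fun s => s - M) '' ↑S)).Adj (e x) (e y) ↔
        (TGraph n ↑S).Adj (x : Fin n) (y : Fin n) := by
    rintro ⟨⟨x, hx⟩, hmx⟩ ⟨⟨y, hy⟩, hmy⟩
    simp only [Set.mem_setOf_eq] at hmx hmy
    simp only [TGraph, tdiff, Set.mem_image, Finset.mem_coe, ne_eq, Fin.ext_iff,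
      he, Fin.val_fin_lt]
    simp only [fwdFun, Fin.val_mk]
    constructor
    · rintro ⟨hne, s, hsS, hse⟩
      have hge := hsmin s hsS
      have hle := (hsub s hsS).2
      constructor
      · intro h; subst h; exact hne rfl
      · have : max x y - min x y = s := by
          rcases hmx with hmx | hmx <;> rcases hmy with hmy | hmy <;>
            split_ifs at hse <;>
            simp only [Nat.max_def, Nat.min_def] at hse ⊢ <;>
            split_ifs at hse ⊢ <;> omega
        rwa [this]
    · rintro ⟨hne, hsS⟩
      have hge := hsmin _ hsS
      have hle := (hsub _ hsS).2
      have hd : max x y - min x y ≤ n - 1 := by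
        simp only [Nat.max_def, Nat.min_def]; split_ifs <;> omega
      refine ⟨?_, max x y - min x y, hsS, ?_⟩ <;>
        [skip; skip] <;>
        rcases hmx with hmx | hmx <;> rcases hmy with hmy | hmy <;>
        split_ifs <;>
        simp only [Nat.max_def, Nat.min_def] at hge ⊢ <;>
        split_ifs at hge ⊢ <;> omega
  refine ⟨⟨e, ?_⟩, ?_⟩
  · intro x y
    exact key x y
  · rintro ⟨⟨x, hx⟩, hmx⟩ ⟨⟨y, hy⟩, hmy⟩ hlt
    simp only [Set.mem_setOf_eq] at hmx hmy
    simp only [Fin.lt_def] at hlt ⊢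
    show fwdFun n s₀ M x < fwdFun n s₀ M y
    simp only [fwdFun]
    split_ifs <;> omega
end

section
/- Let G be a graph with vertex set {1,...,n}. If G is both s-reachable and t-reachable for distinct positive integers s and t with s + t ≤ n, then G is gcd(s,t)-reachable. -/
/-- If `G` on `{1,…,n}` is both `s`-reachable and `t`-reachable for distinct
positive integers `s`, `t` with `s + t ≤ n`, then `G` is `gcd(s,t)`-reachable. -/
theorem stmt7 (n s t : ℕ) (G : SimpleGraph (Fin n)) (hs : 0 < s) (ht : 0 < t)
    (hst : s ≠ t) (hn : s + t ≤ n) (h1 : dReachable G s) (h2 : dReachable G t) :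
    dReachable G (Nat.gcd s t) := by
  set m := s + t with hm_def
  set g := Nat.gcd s t with hg_def
  have hm : 0 < m := by omega
  have hg : 0 < g := Nat.gcd_pos_of_pos_left _ hs
  -- reachability on labels
  set R : ℕ → ℕ → Prop := fun x y =>
    ∀ (hx : x < n) (hy : y < n), G.Reachable ⟨x, hx⟩ ⟨y, hy⟩ with hR
  have Rrefl : ∀ x, R x x := fun x hx hy => SimpleGraph.Reachable.refl _
  have Rsymm : ∀ x y, R x y → R y x := fun x y h hy hx => (h hx hy).symm
  have Rtrans : ∀ x y z, y < n → R x y → R y z → R x z :=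
    fun x y z hy hxy hyz hx hz => (hxy hx hy).trans (hyz hy hz)
  have stepS : ∀ x : ℕ, x + s < n → R x (x + s) := by
    intro x h hx hy
    apply h1
    simp [tdiff]
  have stepT : ∀ x : ℕ, x + t < n → R x (x + t) := by
    intro x h hx hy
    apply h2
    simp [tdiff]
  have jump : ∀ x : ℕ, x + m < n → R x (x + m) := by
    intro x h
    have h1' : x + s < n := by omega
    have h2' : x + s + t < n := by omega
    have := Rtrans x (x + s) (x + s + t) h1' (stepS x h1') (stepT (x + s) h2')
    rwa [show x + s + t = x + m by omega] at this
  have climb : ∀ j x : ℕ, x + m * j < n → R x (x + m * j) := by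
    intro j
    induction j with
    | zero => intro x _; simpa using Rrefl x
    | succ j ih =>
      intro x h
      rw [show m * (j + 1) = m + m * j by ring] at h
      have hx : x + m < n := by omega
      have := Rtrans x (x + m) (x + m + m * j) hx (jump x (by omega))
        (ih (x + m) (by omega))
      rwa [show x + m + m * j = x + m * (j + 1) by ring] at this
  have sameRes : ∀ x y : ℕ, x < n → y < n → x % m = y % m → R x y := by
    have aux : ∀ x y : ℕ, x ≤ y → x < n → y < n → x % m = y % m → R x y := by
      intro x y hxy hx hy hmod
      have hdvd : m ∣ y - x := (Nat.modEq_iff_dvd' hxy).mp hmod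
      obtain ⟨j, hj⟩ := hdvd
      have : y = x + m * j := by omega
      subst this
      exact climb j x hy
    intro x y hx hy hmod
    rcases le_total x y with h | h
    · exact aux x y h hx hy hmod
    · exact Rsymm _ _ (aux y x h hy hx hmod.symm)
  have greedy : ∀ (k u : ℕ), u < n →
      ∃ x, x < n ∧ R u x ∧ x % m = (u + k * s) % m := by
    intro k
    induction k with
    | zero => intro u hu; exact ⟨u, hu, Rrefl u, by simp⟩
    | succ k ih =>
      intro u hu
      obtain ⟨x, hx, hRux, hres⟩ := ih u hu
      by_cases hc : x + s < n
      · refine ⟨x + s, hc, Rtrans u x (x + s) hx hRux (stepS x hc), ?_⟩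
        have : (x + s) % m = (u + k * s + s) % m := Nat.ModEq.add_right s hres
        rwa [show u + k * s + s = u + (k + 1) * s by ring] at this
      · have hxt : t ≤ x := by omega
        refine ⟨x - t, by omega, ?_, ?_⟩
        · have hst' : (x - t) + t < n := by omega
          have := stepT (x - t) hst'
          rw [show x - t + t = x by omega] at this
          exact Rtrans u x (x - t) hx hRux (Rsymm _ _ this)
        · have e1 : (x - t) % m = (x + s) % m := by
            rw [show x + s = (x - t) + m by omega, Nat.add_mod_right]
          have e2 : (x + s) % m = (u + k * s + s) % m := Nat.ModEq.add_right s hres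
          rw [e1, e2, show u + k * s + s = u + (k + 1) * s by ring]
  have bezout : ∃ k : ℕ, (k * s) % m = g % m := by
    have hg2 : Nat.gcd s m = g := by
      rw [hm_def, hg_def, show s + t = t + s by omega, Nat.gcd_add_self_right]
    set a := Nat.gcdA s m with ha
    set b := Nat.gcdB s m with hb
    have hab : (g : ℤ) = s * a + m * b := by rw [← hg2]; exact Nat.gcd_eq_gcd_ab s m
    have hMpos : (0 : ℤ) < (m : ℤ) := by exact_mod_cast hm
    refine ⟨(a % (m : ℤ)).toNat, ?_⟩
    have hk : (((a % (m : ℤ)).toNat : ℕ) : ℤ) = a % (m : ℤ) :=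
      Int.toNat_of_nonneg (Int.emod_nonneg a (by omega))
    have key : (((a % (m : ℤ)).toNat * s : ℕ) : ℤ) % m = ((g : ℕ) : ℤ) % m := by
      push_cast [hk]
      rw [Int.mul_emod, Int.emod_emod_of_dvd _ dvd_rfl, ← Int.mul_emod]
      have : a * (s : ℤ) = (g : ℤ) + (m : ℤ) * (-b) := by
        rw [hab]; ring
      rw [this, Int.add_mul_emod_self_left]
    have := key
    rw [← Int.natCast_mod, ← Int.natCast_mod] at this
    exact_mod_cast this
  have core : ∀ a b : ℕ, a < n → b < n → b = a + g → R a b := by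
    intro a b ha hb hab
    obtain ⟨k, hk⟩ := bezout
    obtain ⟨x, hx, hRux, hres⟩ := greedy k a ha
    refine Rtrans a x b hx hRux (sameRes x b hx hb ?_)
    calc x % m = (a + k * s) % m := hres
      _ = (a + g) % m := by rw [Nat.add_mod, hk, ← Nat.add_mod]
      _ = b % m := by rw [hab]
  intro u v hd
  simp only [tdiff] at hd
  rcases Nat.lt_trichotomy u.val v.val with h | h | h
  · have hv : v.val = u.val + g := by omega
    exact core u.val v.val u.isLt v.isLt hv u.isLt v.isLt
  · exact (Fin.ext h : u = v) ▸ SimpleGraph.Reachable.refl u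
  · have hu : u.val = v.val + g := by omega
    exact (core v.val u.val v.isLt u.isLt hu v.isLt u.isLt).symm
end

section
/- Let G be a d-reachable graph on vertex set {1,...,n}. Then two vertices u and v are in the same connected component of G if and only if their residue classes [u]_d and [v]_d are in the same connected component of the contraction G/Z_d. -/
/-- For a `d`-reachable graph `G`, vertices `u` and `v` are connected in `G`
iff their residue classes `[u]_d` and `[v]_d` are connected in `G/ℤ_d`. -/
theorem stmt8 (n d : ℕ) (hd : 0 < d) (G : SimpleGraph (Fin n))
    (h : dReachable G d) (u v : Fin n) :
    G.Reachable u v ↔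
      (contract G d).Reachable ⟨(u : ℕ) % d, Nat.mod_lt _ hd⟩
        ⟨(v : ℕ) % d, Nat.mod_lt _ hd⟩ := by
  -- vertices in the same residue class are reachable in G
  -- vertices in the same residue class are reachable in G
  have sameClass : ∀ k, ∀ a b : Fin n, tdiff a b = k →
      (a : ℕ) % d = (b : ℕ) % d → G.Reachable a b := by
    intro k
    induction k using Nat.strong_induction_on with
    | _ k ih =>
      have step : ∀ a b : Fin n, tdiff a b = k → (a : ℕ) % d = (b : ℕ) % d →
          (a : ℕ) ≤ (b : ℕ) → G.Reachable a b := by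
        intro a b hk hmod hle
        rcases Nat.eq_or_lt_of_le hle with heq | hlt
        · exact (Fin.ext heq : a = b) ▸ SimpleGraph.Reachable.refl a
        · have hdvd : d ∣ (b : ℕ) - (a : ℕ) := (Nat.modEq_iff_dvd' hle).mp hmod
          have hge : d ≤ (b : ℕ) - (a : ℕ) := Nat.le_of_dvd (by omega) hdvd
          have hwlt : (a : ℕ) + d < n := by have := b.isLt; omega
          have h1 : G.Reachable a ⟨(a : ℕ) + d, hwlt⟩ :=
            h a ⟨(a : ℕ) + d, hwlt⟩ (by simp only [tdiff, Fin.val_mk]; omega)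
          have h2 : G.Reachable (⟨(a : ℕ) + d, hwlt⟩ : Fin n) b := by
            refine ih (k - d) ?_ _ b ?_ ?_
            · unfold tdiff at hk; omega
            · simp only [tdiff, Fin.val_mk]; unfold tdiff at hk; omega
            · simp only [Fin.val_mk]; rw [Nat.add_mod_right]; exact hmod
          exact h1.trans h2
      intro a b hk hmod
      rcases le_total (a : ℕ) (b : ℕ) with hle | hle
      · exact step a b hk hmod hle
      · exact (step b a (by unfold tdiff at hk ⊢; omega) hmod.symm hle).symm
  constructor
  · rintro ⟨w⟩
    induction w with
    | nil => exact SimpleGraph.Reachable.refl _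
    | cons hadj _ ihw =>
      rename_i x y z _
      refine SimpleGraph.Reachable.trans ?_ ihw
      by_cases hxy : (x : ℕ) % d = (y : ℕ) % d
      · rw [show (⟨(x : ℕ) % d, Nat.mod_lt _ hd⟩ : Fin d) =
            ⟨(y : ℕ) % d, Nat.mod_lt _ hd⟩ from Fin.ext hxy]
      · exact SimpleGraph.Adj.reachable
          ⟨fun hc => hxy (congrArg Fin.val hc), x, y, hadj, rfl, rfl⟩
  · rintro ⟨w⟩
    have key : ∀ (i j : Fin d) (_ : (contract G d).Walk i j),
        ∀ a b : Fin n, (a : ℕ) % d = (i : ℕ) → (b : ℕ) % d = (j : ℕ) →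
          G.Reachable a b := by
      intro i j w
      induction w with
      | nil =>
        intro a b ha hb
        exact sameClass (tdiff a b) a b rfl (ha.trans hb.symm)
      | cons hadj _ ihw =>
        intro a b ha hb
        obtain ⟨-, x, y, hxy, hx, hy⟩ := hadj
        have h1 : G.Reachable a x :=
          sameClass (tdiff a x) a x rfl (ha.trans hx.symm)
        exact (h1.trans hxy.reachable).trans (ihw y b hy hb)
    exact key _ _ w u v rfl rfl
end

section
/- Each connected component of a weighted Toeplitz graph is, under the normalized labeling of its vertex set, isomorphic (as a weighted graph) to a weighted Toeplitz graph. -/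
section core

variable {n : ℕ} {S : Set ℕ}

lemma tdiff_eq_of_lt {u v : Fin n} (h : (u : ℕ) < v) : tdiff u v = (v : ℕ) - u := by
  simp [tdiff, Nat.max_eq_right h.le, Nat.min_eq_left h.le]

lemma adj_of_lt {u v : Fin n} (h : (u : ℕ) < v) (hs : (v : ℕ) - u ∈ S) :
    (TGraph n S).Adj u v :=
  ⟨fun e => absurd (congrArg Fin.val e) (Nat.ne_of_lt h), by rwa [tdiff_eq_of_lt h]⟩

lemma mem_of_adj_lt {u v : Fin n} (h : (u : ℕ) < v) (hadj : (TGraph n S).Adj u v) :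
    (v : ℕ) - u ∈ S := by
  rw [← tdiff_eq_of_lt h]; exact hadj.2

variable {k : ℕ} {f : Fin k → Fin n}

/-- no element of the image lies strictly between consecutive images. -/
lemma helper_between (hm : StrictMono f)
    (hcl : ∀ (i : Fin k) (w : Fin n), (TGraph n S).Adj (f i) w → ∃ j, w = f j)
    {p : ℕ} (hp : p + 1 < k) (q : Fin k) (z : Fin n)
    (h1 : (f ⟨p, by omega⟩ : Fin n).val < z.val)
    (h2 : z.val < (f ⟨p+1, hp⟩ : Fin n).val)
    (hadj : (TGraph n S).Adj (f q) z) : False := by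
  obtain ⟨j, rfl⟩ := hcl q z hadj
  have h1' : (⟨p, by omega⟩ : Fin k) < j := hm.lt_iff_lt.mp (by exact h1)
  have h2' : j < (⟨p+1, hp⟩ : Fin k) := hm.lt_iff_lt.mp (by exact h2)
  rw [Fin.lt_def] at h1' h2'
  simp at h1' h2'
  omega

set_option maxHeartbeats 2000000 in
lemma gap_eq (hm : StrictMono f)
    (hcl : ∀ (i : Fin k) (w : Fin n), (TGraph n S).Adj (f i) w → ∃ j, w = f j)
    {i j : ℕ} (hij : i < j) (hj : j + 1 < k)
    (hadj : (TGraph n S).Adj (f ⟨i, by omega⟩) (f ⟨j, by omega⟩) ∨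
            (TGraph n S).Adj (f ⟨i+1, by omega⟩) (f ⟨j+1, hj⟩)) :
    (f ⟨i+1, by omega⟩ : Fin n).val - (f ⟨i, by omega⟩ : Fin n).val
      = (f ⟨j+1, hj⟩ : Fin n).val - (f ⟨j, by omega⟩ : Fin n).val := by
  have hmono : ∀ p q : Fin k, p < q → ((f p : Fin n) : ℕ) < ((f q : Fin n) : ℕ) :=
    fun p q h => by have := hm h; rwa [Fin.lt_def] at this
  set X := (f ⟨i, by omega⟩ : Fin n) with hX
  set X' := (f ⟨i+1, by omega⟩ : Fin n) with hX'
  set Y := (f ⟨j, by omega⟩ : Fin n) with hY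
  set Y' := (f ⟨j+1, hj⟩ : Fin n) with hY'
  have hxx : (X : ℕ) < X' := hmono _ _ (by simp [Fin.lt_def])
  have hyy : (Y : ℕ) < Y' := hmono _ _ (by simp [Fin.lt_def])
  have hxy : (X : ℕ) < Y := hmono _ _ (by simp [Fin.lt_def]; omega)
  have hxy' : (X' : ℕ) < Y' := hmono _ _ (by simp [Fin.lt_def]; omega)
  have hYn : (Y' : ℕ) < n := Y'.isLt
  have hXn : (X' : ℕ) < n := X'.isLt
  by_contra hne
  rcases hadj with hadj | hadj
  · have hmem : (Y : ℕ) - X ∈ S := mem_of_adj_lt hxy hadj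
    rcases Nat.lt_or_ge ((X' : ℕ) - X) ((Y' : ℕ) - Y) with ht | ht
    · -- t₁ < t₂ : z = Y + t₁ strictly between Y and Y', adjacent to X'
      set z : Fin n := ⟨(Y : ℕ) + ((X' : ℕ) - X), by omega⟩ with hz
      have hadj' : (TGraph n S).Adj X' z := by
        apply adj_of_lt (by simp [hz]; omega)
        have : (z : ℕ) - X' = (Y : ℕ) - X := by simp [hz]; omega
        rwa [this]
      exact helper_between hm hcl hj ⟨i+1, by omega⟩ z (by simp [hz]; omega)
        (by simp [hz]; omega) hadj'
    · have ht : (Y' : ℕ) - Y < (X' : ℕ) - X := by omega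
      -- z = X + t₂ strictly between X and X', adjacent to Y'
      set z : Fin n := ⟨(X : ℕ) + ((Y' : ℕ) - Y), by omega⟩ with hz
      have hadj' : (TGraph n S).Adj Y' z := by
        apply ((TGraph n S).adj_symm)
        apply adj_of_lt (by simp [hz]; omega)
        have : (Y' : ℕ) - z = (Y : ℕ) - X := by simp [hz]; omega
        rwa [this]
      exact helper_between hm hcl (by omega : i + 1 < k) ⟨j+1, hj⟩ z
        (by simp [hz]; omega) (by simp [hz]; omega) hadj'
  · have hmem : (Y' : ℕ) - X' ∈ S := mem_of_adj_lt hxy' hadj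
    rcases Nat.lt_or_ge ((X' : ℕ) - X) ((Y' : ℕ) - Y) with ht | ht
    · -- z = Y' - t₁, strictly between Y and Y', adjacent to X
      set z : Fin n := ⟨(Y' : ℕ) - ((X' : ℕ) - X), by omega⟩ with hz
      have hadj' : (TGraph n S).Adj X z := by
        apply adj_of_lt (by simp [hz]; omega)
        have : (z : ℕ) - X = (Y' : ℕ) - X' := by simp [hz]; omega
        rwa [this]
      exact helper_between hm hcl hj ⟨i, by omega⟩ z (by simp [hz]; omega)
        (by simp [hz]; omega) hadj'
    · have ht : (Y' : ℕ) - Y < (X' : ℕ) - X := by omega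
      -- z = X' - t₂, strictly between X and X', adjacent to Y
      set z : Fin n := ⟨(X' : ℕ) - ((Y' : ℕ) - Y), by omega⟩ with hz
      have hadj' : (TGraph n S).Adj Y z := by
        apply ((TGraph n S).adj_symm)
        apply adj_of_lt (by simp [hz]; omega)
        have : (Y : ℕ) - z = (Y' : ℕ) - X' := by simp [hz]; omega
        rwa [this]
      exact helper_between hm hcl (by omega : i + 1 < k) ⟨j, by omega⟩ z
        (by simp [hz]; omega) (by simp [hz]; omega) hadj'

end core
section core2

variable {n : ℕ} {S : Set ℕ} {k : ℕ} {f : Fin k → Fin n}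

lemma tdiff_comm {n : ℕ} (u v : Fin n) : tdiff u v = tdiff v u := by
  simp [tdiff, Nat.max_comm, Nat.min_comm]

set_option maxHeartbeats 2000000 in
lemma step_iff (hm : StrictMono f)
    (hcl : ∀ (i : Fin k) (w : Fin n), (TGraph n S).Adj (f i) w → ∃ j, w = f j)
    {i j : ℕ} (hij : i < j) (hj : j + 1 < k) :
    ((TGraph n S).Adj (f ⟨i, by omega⟩) (f ⟨j, by omega⟩) ↔
      (TGraph n S).Adj (f ⟨i+1, by omega⟩) (f ⟨j+1, hj⟩)) ∧
    ((TGraph n S).Adj (f ⟨i, by omega⟩) (f ⟨j, by omega⟩) →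
      tdiff (f ⟨i, by omega⟩) (f ⟨j, by omega⟩) = tdiff (f ⟨i+1, by omega⟩) (f ⟨j+1, hj⟩)) := by
  have hmono : ∀ p q : Fin k, p < q → ((f p : Fin n) : ℕ) < ((f q : Fin n) : ℕ) :=
    fun p q h => by have := hm h; rwa [Fin.lt_def] at this
  have hxx := hmono ⟨i, by omega⟩ ⟨i+1, by omega⟩ (by simp [Fin.lt_def])
  have hyy := hmono ⟨j, by omega⟩ ⟨j+1, hj⟩ (by simp [Fin.lt_def])
  have hxy := hmono ⟨i, by omega⟩ ⟨j, by omega⟩ (by simp [Fin.lt_def]; omega)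
  have hxy' := hmono ⟨i+1, by omega⟩ ⟨j+1, hj⟩ (by simp [Fin.lt_def]; omega)
  constructor
  · constructor
    · intro h
      have hg := gap_eq hm hcl hij hj (Or.inl h)
      have hmem := mem_of_adj_lt hxy h
      apply adj_of_lt hxy'
      have he : ((f ⟨j+1, hj⟩ : Fin n) : ℕ) - (f ⟨i+1, by omega⟩ : Fin n)
          = ((f ⟨j, by omega⟩ : Fin n) : ℕ) - (f ⟨i, by omega⟩ : Fin n) := by omega
      rwa [he]
    · intro h
      have hg := gap_eq hm hcl hij hj (Or.inr h)
      have hmem := mem_of_adj_lt hxy' h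
      apply adj_of_lt hxy
      have he : ((f ⟨j, by omega⟩ : Fin n) : ℕ) - (f ⟨i, by omega⟩ : Fin n)
          = ((f ⟨j+1, hj⟩ : Fin n) : ℕ) - (f ⟨i+1, by omega⟩ : Fin n) := by omega
      rwa [he]
  · intro h
    have hg := gap_eq hm hcl hij hj (Or.inl h)
    rw [tdiff_eq_of_lt hxy, tdiff_eq_of_lt hxy']
    omega

lemma tnormalize (hm : StrictMono f)
    (hcl : ∀ (i : Fin k) (w : Fin n), (TGraph n S).Adj (f i) w → ∃ j, w = f j) :
    ∀ (i m : ℕ) (h0 : 0 < m) (h : i + m < k),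
      ((TGraph n S).Adj (f ⟨i, by omega⟩) (f ⟨i+m, h⟩) ↔
        (TGraph n S).Adj (f ⟨0, by omega⟩) (f ⟨m, by omega⟩)) ∧
      ((TGraph n S).Adj (f ⟨i, by omega⟩) (f ⟨i+m, h⟩) →
        tdiff (f ⟨i, by omega⟩) (f ⟨i+m, h⟩) = tdiff (f ⟨0, by omega⟩) (f ⟨m, by omega⟩)) := by
  intro i
  induction i with
  | zero =>
    intro m h0 h
    have e1 : (⟨0+m, h⟩ : Fin k) = ⟨m, by omega⟩ := Fin.mk_eq_mk.mpr (by omega)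
    rw [e1]
    exact ⟨Iff.rfl, fun _ => rfl⟩
  | succ i ih =>
    intro m h0 h
    have e1 : (⟨i+1+m, h⟩ : Fin k) = ⟨i+m+1, by omega⟩ := Fin.mk_eq_mk.mpr (by omega)
    rw [e1]
    obtain ⟨s1, s2⟩ := step_iff hm hcl (show i < i + m by omega) (show (i+m)+1 < k by omega)
    obtain ⟨ih1, ih2⟩ := ih m h0 (by omega)
    refine ⟨s1.symm.trans ih1, fun hadj => ?_⟩
    have h' := s1.mpr hadj
    exact (s2 h').symm.trans (ih2 h')

end core2

set_option maxHeartbeats 2000000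

/-- Each connected component of a weighted Toeplitz graph (with weights
`w(ij) = a_{|i-j|}`) is, under the normalized (order-preserving) labeling of
its vertex set, isomorphic as a weighted graph to a weighted Toeplitz graph. -/
theorem stmt12 (n : ℕ) (a : ℕ → ℝ)
    (c : (TGraph n {s : ℕ | a s ≠ 0}).ConnectedComponent) :
    ∃ (k : ℕ) (b : ℕ → ℝ)
      (φ : {v : Fin n // (TGraph n {s : ℕ | a s ≠ 0}).connectedComponentMk v = c}
            ≃ Fin k),
      (∀ x y : {v : Fin n // (TGraph n {s : ℕ | a s ≠ 0}).connectedComponentMk v = c},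
          (x : Fin n) < (y : Fin n) → φ x < φ y) ∧
      (∀ x y : {v : Fin n // (TGraph n {s : ℕ | a s ≠ 0}).connectedComponentMk v = c},
          (TGraph n {s : ℕ | a s ≠ 0}).Adj x y ↔
            (TGraph k {s : ℕ | b s ≠ 0}).Adj (φ x) (φ y)) ∧
      (∀ x y : {v : Fin n // (TGraph n {s : ℕ | a s ≠ 0}).connectedComponentMk v = c},
          (TGraph n {s : ℕ | a s ≠ 0}).Adj x y →
            a (tdiff (x : Fin n) (y : Fin n)) = b (tdiff (φ x) (φ y))) := by
  classical
  let G : SimpleGraph (Fin n) := TGraph n {s : ℕ | a s ≠ 0}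
  let F : Finset (Fin n) := Finset.univ.filter (fun v => G.connectedComponentMk v = c)
  let k := F.card
  let e : Fin k ≃o {x // x ∈ F} := F.orderIsoOfFin rfl
  let f : Fin k → Fin n := fun i => (e i : Fin n)
  have hm : StrictMono f := fun p q h => Subtype.coe_lt_coe.mpr (e.strictMono h)
  have hmemF : ∀ v : Fin n, v ∈ F ↔ G.connectedComponentMk v = c := by
    intro v; simp [F]
  have hcl : ∀ (i : Fin k) (w : Fin n), G.Adj (f i) w → ∃ j, w = f j := by
    intro i w hadj
    have hfi : (f i) ∈ F := (e i).2
    have hw : w ∈ F := by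
      rw [hmemF] at hfi ⊢
      rw [← hfi]
      exact SimpleGraph.ConnectedComponent.sound hadj.symm.reachable
    exact ⟨e.symm ⟨w, hw⟩, by simp [f]⟩
  let φ : {v : Fin n // G.connectedComponentMk v = c} ≃ Fin k :=
    (Equiv.subtypeEquivRight (fun v => (hmemF v).symm)).trans e.symm.toEquiv
  have hfφ : ∀ x : {v : Fin n // G.connectedComponentMk v = c}, f (φ x) = (x : Fin n) := by
    intro x
    show ((e (e.symm _)) : Fin n) = _
    rw [OrderIso.apply_symm_apply]
    simp [Equiv.subtypeEquivRight]; rfl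
  let b : ℕ → ℝ := fun m =>
    if h : 0 < m ∧ m < k then
      if G.Adj (f ⟨0, h.1.trans h.2⟩) (f ⟨m, h.2⟩) then
        a (tdiff (f ⟨0, h.1.trans h.2⟩) (f ⟨m, h.2⟩))
      else 0
    else 0
  have key : ∀ x y : {v : Fin n // G.connectedComponentMk v = c}, φ x < φ y →
      ((G.Adj x y ↔ (TGraph k {s : ℕ | b s ≠ 0}).Adj (φ x) (φ y)) ∧
       (G.Adj x y → a (tdiff (x : Fin n) (y : Fin n)) = b (tdiff (φ x) (φ y)))) := by
    intro x y hlt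
    set i := φ x with hi
    set j := φ y with hj
    have hij : (i : ℕ) < (j : ℕ) := Fin.lt_def.mp hlt
    set m := (j : ℕ) - (i : ℕ) with hmdef
    have h0 : 0 < m := by omega
    have h : (i : ℕ) + m < k := by have := j.isLt; omega
    obtain ⟨hiff, heq⟩ := tnormalize hm hcl (i : ℕ) m h0 h
    have ei : (⟨(i : ℕ), by omega⟩ : Fin k) = i := rfl
    have ej : (⟨(i : ℕ) + m, h⟩ : Fin k) = j := Fin.ext (by simp; omega)
    rw [ei, ej] at hiff heq
    have htij : tdiff i j = m := tdiff_eq_of_lt hij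
    have hbm : b m = if G.Adj (f ⟨0, h0.trans_le (by omega)⟩) (f ⟨m, by omega⟩) then
        a (tdiff (f ⟨0, h0.trans_le (by omega)⟩) (f ⟨m, by omega⟩)) else 0 := by
      show dite _ _ _ = _
      rw [dif_pos ⟨h0, by omega⟩]
    have hAxy : G.Adj (x : Fin n) (y : Fin n) ↔ G.Adj (f i) (f j) := by
      rw [hfφ x, hfφ y]
    by_cases hA : G.Adj (f ⟨0, h0.trans_le (by omega)⟩) (f ⟨m, by omega⟩)
    · have hb : b m = a (tdiff (f ⟨0, h0.trans_le (by omega)⟩) (f ⟨m, by omega⟩)) := by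
        rw [hbm, if_pos hA]
      have hbne : b m ≠ 0 := by rw [hb]; exact hA.2
      constructor
      · constructor
        · intro _
          exact ⟨Fin.ne_of_lt hlt, by rw [Set.mem_setOf_eq, htij]; exact hbne⟩
        · intro _
          rw [hAxy, hiff]; exact hA
      · intro hadj
        have hadj' : G.Adj (f i) (f j) := hAxy.mp hadj
        have : tdiff (x : Fin n) (y : Fin n) = tdiff (f i) (f j) := by rw [hfφ x, hfφ y]
        rw [this, heq hadj', htij, hb]
    · have hb : b m = 0 := by rw [hbm, if_neg hA]
      constructor
      · constructor
        · intro hadj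
          exact absurd (hiff.mp (hAxy.mp hadj)) hA
        · intro hadj
          have : b (tdiff i j) ≠ 0 := hadj.2
          rw [htij, hb] at this
          exact absurd rfl this
      · intro hadj
        exact absurd (hiff.mp (hAxy.mp hadj)) hA
  refine ⟨k, b, φ, ?_, ?_, ?_⟩
  · intro x y hxy
    apply hm.lt_iff_lt.mp
    rw [hfφ x, hfφ y]
    exact hxy
  · intro x y
    rcases lt_trichotomy (φ x) (φ y) with h | h | h
    · exact (key x y h).1
    · have hxy : x = y := φ.injective h
      subst hxy
      constructor
      · intro hadj; exact absurd rfl hadj.ne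
      · intro hadj; exact absurd rfl hadj.ne
    · have h1 := (key y x h).1
      constructor
      · intro hadj; exact ((TGraph k {s : ℕ | b s ≠ 0}).adj_symm) (h1.mp (G.adj_symm hadj))
      · intro hadj; exact G.adj_symm (h1.mpr ((TGraph k {s : ℕ | b s ≠ 0}).adj_symm hadj))
  · intro x y hadj
    rcases lt_trichotomy (φ x) (φ y) with h | h | h
    · exact (key x y h).2 hadj
    · have hxy : x = y := φ.injective h
      subst hxy
      exact absurd rfl hadj.ne
    · have h2 := (key y x h).2 (G.adj_symm hadj)
      rw [tdiff_comm ((y : Fin n)) ((x : Fin n)), tdiff_comm (φ y) (φ x)] at h2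
      exact h2
end

section
/- Let A be a symmetric Boolean Toeplitz matrix of order n with zero main diagonal and S_A nonempty. Define a sequence by d_1 = min S_A, and, as long as there exists s ∈ S_A \ {d_1,...} with s ≤ n - d_i and d_i ∤ s, set d_{i+1} = gcd(d_i, s). Then this sequence is strictly decreasing, so the process terminates; moreover G(A) is d_i-reachable for every i. -/
lemma reach_mul {n d : ℕ} {G : SimpleGraph (Fin n)} (hd : dReachable G d) (hdpos : 0 < d) :
    ∀ k (x y : Fin n), (y : ℕ) = (x : ℕ) + k * d → G.Reachable x y := by
  intro k
  induction k with
  | zero =>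
    intro x y h
    simp only [Nat.zero_mul, Nat.add_zero] at h
    exact (Fin.ext h.symm : x = y) ▸ SimpleGraph.Reachable.refl x
  | succ k ih =>
    intro x y h
    rw [Nat.succ_mul] at h
    have hz : (x : ℕ) + k * d < n := by have := y.isLt; omega
    have h1 : G.Reachable x ⟨(x : ℕ) + k * d, hz⟩ := ih x _ rfl
    refine h1.trans (hd _ y ?_)
    simp only [tdiff]
    omega

lemma reach_mod {n d : ℕ} {G : SimpleGraph (Fin n)} (hd : dReachable G d) (hdpos : 0 < d)
    (x y : Fin n) (h : (x : ℕ) % d = (y : ℕ) % d) : G.Reachable x y := by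
  rcases le_total (x : ℕ) (y : ℕ) with h1 | h1
  · obtain ⟨k, hk⟩ := (Nat.modEq_iff_dvd' h1).mp h
    rw [Nat.mul_comm] at hk
    exact reach_mul hd hdpos k x y (by omega)
  · obtain ⟨k, hk⟩ := (Nat.modEq_iff_dvd' h1).mp h.symm
    rw [Nat.mul_comm] at hk
    exact (reach_mul hd hdpos k y x (by omega)).symm

lemma step_reach {n d s : ℕ} {S : Finset ℕ} (hs : s ∈ S) (hspos : 0 < s)
    (hdpos : 0 < d) (hdn : d ≤ n) (hsn : s + d ≤ n)
    (hd : dReachable (TGraph n ↑S) d) : dReachable (TGraph n ↑S) (Nat.gcd d s) := by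
  set G := TGraph n ↑S with hG
  by_cases hdvd : d ∣ s
  · rwa [Nat.gcd_eq_left hdvd]
  -- key: from a vertex below d, we can reach (x + k*s) % d
  have key : ∀ k (x : Fin n), (x : ℕ) < d →
      G.Reachable x ⟨((x : ℕ) + k * s) % d, lt_of_lt_of_le (Nat.mod_lt _ hdpos) hdn⟩ := by
    intro k
    induction k with
    | zero =>
      intro x hx
      apply reach_mod hd hdpos
      show (x : ℕ) % d = ((x : ℕ) + 0 * s) % d % d
      rw [Nat.mod_mod_of_dvd _ dvd_rfl]
      simp [Nat.mod_eq_of_lt hx]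
    | succ k ih =>
      intro x hx
      set y : Fin n := ⟨((x : ℕ) + k * s) % d, lt_of_lt_of_le (Nat.mod_lt _ hdpos) hdn⟩ with hy
      have hyd : (y : ℕ) < d := Nat.mod_lt _ hdpos
      have hzlt : (y : ℕ) + s < n := by omega
      set z : Fin n := ⟨(y : ℕ) + s, hzlt⟩ with hz
      have hadj : G.Adj y z := by
        refine ⟨?_, ?_⟩
        · intro hq
          have := congrArg Fin.val hq
          simp only [hz] at this
          omega
        · have : tdiff y z = s := by simp only [tdiff, hz]; omega
          rw [this]; exact_mod_cast hs
      have h2 : G.Reachable z ⟨((x : ℕ) + (k+1) * s) % d, lt_of_lt_of_le (Nat.mod_lt _ hdpos) hdn⟩ := by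
        apply reach_mod hd hdpos
        show ((((x : ℕ) + k * s) % d) + s) % d = ((x : ℕ) + (k+1) * s) % d % d
        rw [Nat.mod_add_mod, Nat.mod_mod_of_dvd _ dvd_rfl, Nat.succ_mul, ← Nat.add_assoc]
      exact ((ih x hx).trans hadj.reachable).trans h2
  have hgdvd : Nat.gcd d s ∣ s := Nat.gcd_dvd_right _ _
  have hgle : Nat.gcd d s ≤ d := Nat.le_of_dvd hdpos (Nat.gcd_dvd_left _ _)
  have hglt : Nat.gcd s d < d := by
    rw [Nat.gcd_comm]
    rcases lt_or_eq_of_le hgle with h | h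
    · exact h
    · exact absurd (h ▸ hgdvd) hdvd
  obtain ⟨m, -, hm⟩ := Nat.exists_mul_mod_eq_gcd hglt
  rw [Nat.gcd_comm] at hm
  set g := Nat.gcd d s with hg
  have hgpos : 0 < g := Nat.gcd_pos_of_pos_right _ hspos
  have main : ∀ u v : Fin n, (u : ℕ) ≤ (v : ℕ) → tdiff u v = g → G.Reachable u v := by
    intro u v huv htd
    have hv : (v : ℕ) = (u : ℕ) + g := by simp only [tdiff] at htd; omega
    have hrlt : (u : ℕ) % d < n := lt_of_lt_of_le (Nat.mod_lt _ hdpos) hdn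
    have hrlt' : (v : ℕ) % d < n := lt_of_lt_of_le (Nat.mod_lt _ hdpos) hdn
    have h1 : G.Reachable u ⟨(u : ℕ) % d, hrlt⟩ :=
      reach_mod hd hdpos _ _ (Nat.mod_mod_of_dvd _ dvd_rfl).symm
    have h3 : G.Reachable v ⟨(v : ℕ) % d, hrlt'⟩ :=
      reach_mod hd hdpos _ _ (Nat.mod_mod_of_dvd _ dvd_rfl).symm
    have h2 := key m ⟨(u : ℕ) % d, hrlt⟩ (Nat.mod_lt _ hdpos)
    have heq : ((u : ℕ) % d + m * s) % d = (v : ℕ) % d := by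
      rw [Nat.add_mod, Nat.mod_mod_of_dvd _ dvd_rfl, Nat.mul_comm m s, hm,
        Nat.mod_add_mod, ← hv]
    rw [show (⟨((u : ℕ) % d + m * s) % d, _⟩ : Fin n)
        = ⟨(v : ℕ) % d, hrlt'⟩ from Fin.ext heq] at h2
    exact h1.trans (h2.trans h3.symm)
  intro u v htd
  rcases le_total (u : ℕ) (v : ℕ) with h | h
  · exact main u v h htd
  · refine (main v u h ?_).symm
    rw [← htd]; simp [tdiff, Nat.max_comm, Nat.min_comm]


/-- The gcd chain of the DA algorithm: starting from `d 0 = min S_A`, as long as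
there is `s ∈ S_A` with `s ≤ n - dᵢ` and `dᵢ ∤ s`, setting `d_{i+1} = gcd(dᵢ, s)`
yields a strictly decreasing sequence, and `G(A)` is `dᵢ`-reachable for every `i`. -/
theorem stmt14 (n : ℕ) (S : Finset ℕ) (hS : S.Nonempty)
    (hsub : ∀ s ∈ S, 1 ≤ s ∧ s ≤ n - 1) (hmin : 2 * S.min' hS ≤ n)
    (d : ℕ → ℕ) (t : ℕ) (h0 : d 0 = S.min' hS)
    (hstep : ∀ i < t, ∃ s ∈ S, s ≤ n - d i ∧ ¬ d i ∣ s ∧ d (i + 1) = Nat.gcd (d i) s) :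
    (∀ i < t, d (i + 1) < d i) ∧ (∀ i ≤ t, dReachable (TGraph n ↑S) (d i)) := by

  have hmem := S.min'_mem hS
  obtain ⟨h1min, h2min⟩ := hsub _ hmem
  have hn2 : 2 ≤ n := by omega
  have inv : ∀ i ≤ t, 0 < d i ∧ d i ≤ n - 1 ∧ dReachable (TGraph n ↑S) (d i) := by
    intro i
    induction i with
    | zero =>
      intro _
      refine ⟨by omega, by omega, ?_⟩
      intro u v htd
      apply SimpleGraph.Adj.reachable
      refine ⟨?_, ?_⟩
      · intro hq
        rw [hq] at htd
        simp [tdiff] at htd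
        omega
      · rw [htd, h0]
        exact Finset.mem_coe.mpr hmem
    | succ i ih =>
      intro hle
      have hit : i < t := by omega
      obtain ⟨hpos, hle', hreach⟩ := ih (by omega)
      obtain ⟨s, hsS, hsle, hndvd, heq⟩ := hstep i hit
      obtain ⟨hs1, hs2⟩ := hsub s hsS
      rw [heq]
      refine ⟨Nat.gcd_pos_of_pos_right _ (by omega), ?_, ?_⟩
      · have := Nat.le_of_dvd hpos (Nat.gcd_dvd_left (d i) s)
        omega
      · exact step_reach hsS (by omega) hpos (by omega) (by omega) hreach
  refine ⟨?_, fun i hi => (inv i hi).2.2⟩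
  intro i hi
  obtain ⟨s, hsS, hsle, hndvd, heq⟩ := hstep i hi
  have hpos := (inv i (le_of_lt hi)).1
  have hle : Nat.gcd (d i) s ≤ d i := Nat.le_of_dvd hpos (Nat.gcd_dvd_left _ _)
  rcases lt_or_eq_of_le hle with h | h
  · omega
  · exact absurd (h ▸ Nat.gcd_dvd_right (d i) s) hndvd
end

section
/- In a β-type reduction step, if d_i ≤ min S_i ≤ n_i/2 and n_i = q d_i + r with 0 ≤ r < d_i and q ≥ 2, then the reduced size n_{i+1} = d_i + r satisfies n_{i+1}/n_i < 2/3; consequently, if a β-type reduction occurs at least once in every two iterations, the sequence of sizes decreases geometrically and the total work ∑ n_j is O(n). -/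
lemma stmt16_aux : ∀ (t : ℕ) (a : ℕ → ℕ), (∀ j, a (j + 1) ≤ a j) →
    (∀ j, 3 * a (j + 2) ≤ 2 * a j) →
    ∑ j ∈ Finset.range t, a j ≤ 6 * a 0 := by
  intro t
  induction t using Nat.strong_induction_on with
  | _ t ih =>
    match t with
    | 0 => intro a _ _; simp
    | 1 => intro a _ _; simp; omega
    | (t + 2) =>
      intro a h1 h2
      have key := ih t (by omega) (fun j => a (j + 2))
        (fun j => h1 (j + 2)) (fun j => h2 (j + 2))
      rw [Finset.sum_range_succ', Finset.sum_range_succ']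
      have e : ∑ k ∈ Finset.range t, a (k + 1 + 1) = ∑ k ∈ Finset.range t, a (k + 2) := rfl
      rw [e]
      have h2' := h2 0
      have h1' := h1 0
      omega

/-- β-type reduction efficiency: if `2 ≤ q`, `r < d`, `0 < d` and
`nᵢ = q d + r`, then the reduced size `n_{i+1} = d + r` satisfies
`n_{i+1}/nᵢ < 2/3`; consequently, a sequence of sizes that is nonincreasing and
shrinks by a factor `2/3` every two steps has total sum `O(n)`
(bounded by `6 n`). -/
theorem stmt16 :
    (∀ d q r : ℕ, 0 < d → r < d → 2 ≤ q →
      ((d : ℚ) + r) / ((q : ℚ) * d + r) < 2 / 3) ∧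
    (∀ (n t : ℕ) (a : ℕ → ℕ), a 0 ≤ n → (∀ j, a (j + 1) ≤ a j) →
      (∀ j, 3 * a (j + 2) ≤ 2 * a j) →
      ∑ j ∈ Finset.range t, a j ≤ 6 * n) := by
  constructor
  · intro d q r hd hr hq
    have hd' : (1 : ℚ) ≤ (d : ℚ) := by exact_mod_cast hd
    have hr' : (r : ℚ) < d := by exact_mod_cast hr
    have hr0 : (0 : ℚ) ≤ r := by positivity
    have hq' : (2 : ℚ) ≤ q := by exact_mod_cast hq
    have hpos : (0 : ℚ) < (q : ℚ) * d + r := by nlinarith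
    rw [div_lt_div_iff₀ hpos (by norm_num)]
    nlinarith
  · intro n t a h0 h1 h2
    calc ∑ j ∈ Finset.range t, a j ≤ 6 * a 0 := stmt16_aux t a h1 h2
      _ ≤ 6 * n := by omega
end
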